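/- arXiv:1002.0309 — 2 statements merged into one kernel-verified Lean document; each statement's English description precedes it below -/
import Mathlib

section
/- Let G be a group, and let a ∈ G be a left 2-Engel element and b ∈ G a left n-Engel element. Then ab and ba are left 2n-Engel elements of G. -/
/-- The commutator `[a,b] = a⁻¹ b⁻¹ a b`. -/
def cmt {G : Type*} [Group G] (a b : G) : G := a⁻¹ * b⁻¹ * a * b

/-- Left-normed Engel commutator: `engel x y 0 = x`, `engel x y (n+1) = [engel x y n, y]`. -/
def engel {G : Type*} [Group G] (x y : G) : ℕ → G
  | 0 => x
  | n + 1 => cmt (engel x y n) y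

/-!
Let `A` be the normal closure of `a`. Since `a` is left 2-Engel, `a` commutes with all its
conjugates, so `A` centralizes `a`; hence on `A` the maps `[·, a b]` and `[·, b]` agree, and both
preserve `A`. Modulo `A` we have `a b ≡ b`, so `[g, a b, …, a b]` (`n` times) lies in `A`, and
`n` further commutations with `a b` act as commutations with `b` and give `1`. Finally
`b a = a⁻¹ (a b) a`, and being left `m`-Engel is invariant under conjugation.
-/

section Engel

variable {G : Type*} [Group G]

theorem cmt_eq_one_iff_commute {x y : G} : cmt x y = 1 ↔ Commute x y := by
  rw [← Commute.inv_inv_iff, ← commutatorElement_eq_one_iff_commute, commutatorElement_def,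
    inv_inv, inv_inv, cmt]

theorem engel_add (x y : G) (m : ℕ) : ∀ k, engel x y (m + k) = engel (engel x y m) y k
  | 0 => rfl
  | k + 1 => congrArg (cmt · y) (engel_add x y m k)

theorem map_engel {H : Type*} [Group H] (φ : G →* H) (x y : G) :
    ∀ k, φ (engel x y k) = engel (φ x) (φ y) k
  | 0 => rfl
  | k + 1 => by simp [engel, cmt, map_engel φ x y k]

theorem engel_conj (c x y : G) (k : ℕ) :
    engel (c * x * c⁻¹) (c * y * c⁻¹) k = c * engel x y k * c⁻¹ :=
  (map_engel (MulAut.conj c).toMonoidHom x y k).symm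

theorem engel_mem {N : Subgroup G} [hN : N.Normal] {x : G} (hx : x ∈ N) (y : G) :
    ∀ k, engel x y k ∈ N
  | 0 => hx
  | k + 1 => by
    have hconj : y⁻¹ * engel x y k * y⁻¹⁻¹ ∈ N := hN.conj_mem _ (engel_mem hx y k) y⁻¹
    have hcmt : cmt (engel x y k) y = (engel x y k)⁻¹ * (y⁻¹ * engel x y k * y⁻¹⁻¹) := by
      rw [cmt]; group
    rw [engel, hcmt]
    exact N.mul_mem (N.inv_mem (engel_mem hx y k)) hconj

theorem mk_engel_mul_left {N : Subgroup G} [N.Normal] {a : G} (ha : a ∈ N) (x y : G) (k : ℕ) :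
    ((engel x (a * y) k : G) : G ⧸ N) = (engel x y k : G) := by
  have hmk : ((a * y : G) : G ⧸ N) = y := by
    rw [QuotientGroup.mk_mul, (QuotientGroup.eq_one_iff a).mpr ha, one_mul]
  calc ((engel x (a * y) k : G) : G ⧸ N)
      = engel (x : G ⧸ N) ((a * y : G) : G ⧸ N) k := map_engel (QuotientGroup.mk' N) x (a * y) k
    _ = engel (x : G ⧸ N) (y : G ⧸ N) k := by rw [hmk]
    _ = (engel x y k : G) := (map_engel (QuotientGroup.mk' N) x y k).symm

theorem engel_mul_comm_eq_one {a b : G} {m : ℕ} (h : ∀ g, engel g (a * b) m = 1) (g : G) :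
    engel g (b * a) m = 1 := by
  have hba : b * a = a⁻¹ * (a * b) * a⁻¹⁻¹ := by group
  have hg : g = a⁻¹ * (a * g * a⁻¹) * a⁻¹⁻¹ := by group
  rw [hba, hg, engel_conj, h, mul_one, mul_inv_cancel]

theorem commute_conj_of_engel_two {a : G} (ha : ∀ g, engel g a 2 = 1) (c : G) :
    Commute a (c * a * c⁻¹) := by
  have hcmt : cmt c⁻¹ a = (c * a * c⁻¹)⁻¹ * a := by rw [cmt]; group
  have h : Commute ((c * a * c⁻¹)⁻¹ * a) a := hcmt ▸ cmt_eq_one_iff_commute.mp (ha c⁻¹)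
  have h' := h.mul_left (Commute.refl a).inv_left
  rw [mul_inv_cancel_right, Commute.inv_left_iff] at h'
  exact h'.symm

theorem normalClosure_le_centralizer_of_engel_two {a : G} (ha : ∀ g, engel g a 2 = 1) :
    Subgroup.normalClosure {a} ≤ Subgroup.centralizer {a} := by
  refine (Subgroup.closure_le _).mpr fun x hx => ?_
  obtain ⟨_, rfl, hconj⟩ := Group.mem_conjugatesOfSet_iff.mp hx
  obtain ⟨c, rfl⟩ := isConj_iff.mp hconj
  exact Subgroup.mem_centralizer_singleton_iff.mpr (commute_conj_of_engel_two ha c).eq.symm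

theorem cmt_mul_left_of_commute {x a : G} (hxa : Commute x a) (y : G) :
    cmt x (a * y) = cmt x y := by
  calc cmt x (a * y) = x⁻¹ * y⁻¹ * (a⁻¹ * x) * a * y := by rw [cmt]; group
    _ = cmt x y := by rw [← hxa.inv_right.eq, cmt]; group

theorem engel_mul_left_of_le_centralizer {N : Subgroup G} [N.Normal] {a : G}
    (hN : N ≤ Subgroup.centralizer {a}) {x : G} (hx : x ∈ N) (y : G) :
    ∀ k, engel x (a * y) k = engel x y k
  | 0 => rfl
  | k + 1 => by
    have hcomm : Commute (engel x y k) a :=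
      Subgroup.mem_centralizer_singleton_iff.mp (hN (engel_mem hx y k))
    rw [engel, engel, engel_mul_left_of_le_centralizer hN hx y k,
      cmt_mul_left_of_commute hcomm]

end Engel

theorem stmt9 {G : Type*} [Group G] (a b : G) (n : ℕ)
    (ha : ∀ g : G, engel g a 2 = 1)
    (hb : ∀ g : G, engel g b n = 1) :
    (∀ g : G, engel g (a * b) (2 * n) = 1) ∧ (∀ g : G, engel g (b * a) (2 * n) = 1) := by
  set A := Subgroup.normalClosure ({a} : Set G)
  have haA : a ∈ A := Subgroup.subset_normalClosure rfl
  have hab : ∀ g, engel g (a * b) (2 * n) = 1 := by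
    intro g
    have hmem : engel g (a * b) n ∈ A := by
      rw [← QuotientGroup.eq_one_iff, mk_engel_mul_left haA, hb, QuotientGroup.mk_one]
    rw [two_mul, engel_add,
      engel_mul_left_of_le_centralizer (normalClosure_le_centralizer_of_engel_two ha) hmem, hb]
  exact ⟨hab, engel_mul_comm_eq_one hab⟩
end

section
/- In any group G, the set R₂(G) of right 2-Engel elements is a subgroup: if [a,x,x] = 1 and [b,x,x] = 1 for all x ∈ G, then [ab⁻¹, x, x] = 1 for all x ∈ G. -/
/-!
A right 2-Engel element `a` commutes with `[a, g]`, because `[a, a g] = [a, g]`; hence `a` commutes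
with its conjugates and the normal closure `N` of `a` is abelian. Right 2-Engel elements are
closed under conjugation, and inside `N` under products and inverses, so every element of `N` is
right 2-Engel. Written additively, the maps `δ_g = [·, g]` are endomorphisms of `N` with
`δ_g² = 0` and `δ_{gh} = δ_h + δ_g + δ_h δ_g`; a short computation in the endomorphism ring
then gives `δ_x δ_y δ_x = 0`, i.e. `[a, x, y, x] = 1`. Consequently each factor of
`[a b, x] = [a, x] [a, x, b] [b, x]` commutes with `x` when `a` and `b` are right 2-Engel, and
`a⁻¹ ∈ N` is right 2-Engel.
-/

theorem mul_mul_eq_zero_of_mul_self_eq_zero {R : Type*} [Ring R] {a b : R} (ha : a * a = 0)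
    (hb : b * b = 0) (hab : (b + a + b * a) * (b + a + b * a) = 0) : a * b * a = 0 := by
  have ha' (x : R) : a * (a * x) = 0 := by rw [← mul_assoc, ha, zero_mul]
  have hb' (x : R) : b * (b * x) = 0 := by rw [← mul_assoc, hb, zero_mul]
  have hright : a * b * a + b * a * b * a = 0 := by
    simpa only [add_mul, mul_add, mul_assoc, ha, hb, ha', hb', mul_zero, zero_mul, add_zero,
      zero_add] using congrArg (· * a) hab
  have hleft : b * a * b + b * a * b * a = 0 := by
    simpa only [add_mul, mul_add, mul_assoc, ha, hb, ha', hb', mul_zero, zero_mul, add_zero,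
      zero_add] using congrArg (b * ·) hab
  have hsymm : a * b * a = b * a * b := add_right_cancel (hright.trans hleft.symm)
  have hvanish : b * a * b * a = 0 := by
    calc b * a * b * a = b * (a * b * a) := by simp only [mul_assoc]
      _ = b * b * (a * b) := by rw [hsymm]; simp only [mul_assoc]
      _ = 0 := by rw [hb, zero_mul]
  rwa [hvanish, add_zero] at hright

section Commutator

variable {G : Type*} [Group G]

theorem cmt_eq_one_iff {p q : G} : cmt p q = 1 ↔ Commute p q := by
  rw [show cmt p q = (q * p)⁻¹ * (p * q) by simp only [cmt]; group, inv_mul_eq_one, eq_comm]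
  rfl

@[simp]
theorem cmt_one_left (g : G) : cmt 1 g = 1 := by simp [cmt]

theorem cmt_mul_left (m n g : G) : cmt (m * n) g = n⁻¹ * cmt m g * n * cmt n g := by
  simp only [cmt]; group

theorem cmt_mul_right (m g h : G) : cmt m (g * h) = cmt m h * cmt m g * cmt (cmt m g) h := by
  simp only [cmt]; group

theorem cmt_conj (m c g : G) : cmt (c * m * c⁻¹) g = c * cmt m (c⁻¹ * g * c) * c⁻¹ := by
  simp only [cmt]; group

end Commutator

def IsRightTwoEngel {G : Type*} [Group G] (a : G) : Prop := ∀ x : G, cmt (cmt a x) x = 1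

namespace Subgroup

open scoped IsMulCommutative

variable {G : Type*} [Group G] {N : Subgroup G} [N.Normal]

theorem cmt_mem {m : G} (hm : m ∈ N) (g : G) : cmt m g ∈ N := by
  rw [show cmt m g = m⁻¹ * (g⁻¹ * m * g) by simp only [cmt]; group]
  exact mul_mem (inv_mem hm) (Normal.conj_mem' inferInstance m hm g)

variable [IsMulCommutative N]

theorem cmt_mul_of_mem {m n : G} (hm : m ∈ N) (hn : n ∈ N) (g : G) :
    cmt (m * n) g = cmt m g * cmt n g := by
  rw [cmt_mul_left, mul_assoc n⁻¹, setLike_mul_comm (cmt_mem hm g) hn,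
    inv_mul_cancel_left]

theorem cmt_inv_of_mem {m : G} (hm : m ∈ N) (g : G) : cmt m⁻¹ g = (cmt m g)⁻¹ := by
  refine eq_inv_of_mul_eq_one_right ?_
  rw [← cmt_mul_of_mem hm (inv_mem hm), mul_inv_cancel, cmt_one_left]

theorem isRightTwoEngel_mul_of_mem {m n : G} (hm : m ∈ N) (hn : n ∈ N)
    (hm' : IsRightTwoEngel m) (hn' : IsRightTwoEngel n) : IsRightTwoEngel (m * n) := fun x ↦ by
  rw [cmt_mul_of_mem hm hn, cmt_mul_of_mem (cmt_mem hm x) (cmt_mem hn x), hm', hn', one_mul]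

theorem isRightTwoEngel_inv_of_mem {m : G} (hm : m ∈ N) (hm' : IsRightTwoEngel m) :
    IsRightTwoEngel m⁻¹ := fun x ↦ by
  rw [cmt_inv_of_mem hm, cmt_inv_of_mem (cmt_mem hm x), hm', inv_one]

variable (N) in
/-- `cmtRight N g` is the endomorphism `m ↦ [m, g]` of the abelian group `N`, written additively;
as composition is the product, `cmtRight N h * cmtRight N g` sends `m` to `[m, g, h]`. -/
def cmtRight (g : G) : AddMonoid.End (Additive N) where
  toFun m := .ofMul ⟨cmt (m.toMul : G) g, cmt_mem m.toMul.2 g⟩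
  map_zero' := by ext; exact cmt_one_left g
  map_add' m n := by ext; exact cmt_mul_of_mem m.toMul.2 n.toMul.2 g

theorem cmtRight_mul (g h : G) :
    cmtRight N (g * h) = cmtRight N h + cmtRight N g + cmtRight N h * cmtRight N g := by
  ext m
  exact cmt_mul_right _ g h

theorem cmt_cmt_cmt_eq_one (hN : ∀ m ∈ N, IsRightTwoEngel m) {m : G} (hm : m ∈ N) (g h : G) :
    cmt (cmt (cmt m g) h) g = 1 := by
  have hsq (g : G) : cmtRight N g * cmtRight N g = 0 := by
    ext m
    exact hN _ m.toMul.2 g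
  have := mul_mul_eq_zero_of_mul_self_eq_zero (hsq g) (hsq h) (by rw [← cmtRight_mul, hsq])
  exact congrArg (fun f : AddMonoid.End (Additive N) ↦ ((f (.ofMul ⟨m, hm⟩)).toMul : G)) this

end Subgroup

namespace IsRightTwoEngel

variable {G : Type*} [Group G] {a b : G}

theorem commute_cmt (ha : IsRightTwoEngel a) (g : G) : Commute a (cmt a g) := by
  have hg : Commute (cmt a g) g := cmt_eq_one_iff.mp (ha g)
  have hag : Commute (cmt a g) (a * g) := by
    rw [← cmt_eq_one_iff, ← ha (a * g)]
    congr 1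
    simp only [cmt]; group
  simpa using (hag.mul_right hg.inv_right).symm

theorem conj (ha : IsRightTwoEngel a) (c : G) : IsRightTwoEngel (c * a * c⁻¹) := fun x ↦ by
  rw [cmt_conj, cmt_conj, ha, mul_one, mul_inv_cancel]

theorem commute_conj (ha : IsRightTwoEngel a) (c d : G) :
    Commute (c * a * c⁻¹) (d * a * d⁻¹) := by
  rw [show d * a * d⁻¹ = c * (a * cmt a (d⁻¹ * c)) * c⁻¹ by simp only [cmt]; group]
  exact ((Commute.refl a).mul_right (ha.commute_cmt _)).conj c

theorem isMulCommutative_normalClosure (ha : IsRightTwoEngel a) :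
    IsMulCommutative (Subgroup.normalClosure {a}) := by
  refine Subgroup.isMulCommutative_closure fun x hx y hy ↦ ?_
  obtain ⟨_, rfl, hax⟩ := Group.mem_conjugatesOfSet_iff.mp hx
  obtain ⟨_, rfl, hay⟩ := Group.mem_conjugatesOfSet_iff.mp hy
  obtain ⟨c, rfl⟩ := isConj_iff.mp hax
  obtain ⟨d, rfl⟩ := isConj_iff.mp hay
  exact ha.commute_conj c d

theorem of_mem_normalClosure (ha : IsRightTwoEngel a) {m : G}
    (hm : m ∈ Subgroup.normalClosure {a}) : IsRightTwoEngel m := by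
  have := ha.isMulCommutative_normalClosure
  induction hm using Subgroup.closure_induction with
  | mem x hx =>
    obtain ⟨_, rfl, hax⟩ := Group.mem_conjugatesOfSet_iff.mp hx
    obtain ⟨c, rfl⟩ := isConj_iff.mp hax
    exact ha.conj c
  | one => intro x; simp
  | mul m n hm hn ihm ihn =>
    exact Subgroup.isRightTwoEngel_mul_of_mem (N := Subgroup.normalClosure {a}) hm hn ihm ihn
  | inv m hm ihm =>
    exact Subgroup.isRightTwoEngel_inv_of_mem (N := Subgroup.normalClosure {a}) hm ihm

theorem cmt_cmt_cmt_eq_one (ha : IsRightTwoEngel a) (x y : G) : cmt (cmt (cmt a x) y) x = 1 :=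
  have := ha.isMulCommutative_normalClosure
  Subgroup.cmt_cmt_cmt_eq_one (fun _ ↦ ha.of_mem_normalClosure)
    (Subgroup.subset_normalClosure rfl) x y

theorem mul (ha : IsRightTwoEngel a) (hb : IsRightTwoEngel b) : IsRightTwoEngel (a * b) := by
  intro x
  have hexpand : cmt (a * b) x = cmt a x * cmt (cmt a x) b * cmt b x := by
    simp only [cmt]; group
  rw [hexpand, cmt_eq_one_iff]
  have hax := cmt_eq_one_iff.mp (ha x)
  have haxb := cmt_eq_one_iff.mp (ha.cmt_cmt_cmt_eq_one x b)
  exact (hax.mul_left haxb).mul_left (cmt_eq_one_iff.mp (hb x))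

theorem inv (ha : IsRightTwoEngel a) : IsRightTwoEngel a⁻¹ :=
  ha.of_mem_normalClosure (inv_mem (Subgroup.subset_normalClosure rfl))

end IsRightTwoEngel

def Subgroup.rightTwoEngel (G : Type*) [Group G] : Subgroup G where
  carrier := {a | IsRightTwoEngel a}
  mul_mem' := IsRightTwoEngel.mul
  one_mem' x := by simp
  inv_mem' := IsRightTwoEngel.inv

theorem stmt18 {G : Type*} [Group G] (a b : G)
    (ha : ∀ x : G, cmt (cmt a x) x = 1)
    (hb : ∀ x : G, cmt (cmt b x) x = 1) :
    ∀ x : G, cmt (cmt (a * b⁻¹) x) x = 1 :=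
  (Subgroup.rightTwoEngel G).mul_mem ha ((Subgroup.rightTwoEngel G).inv_mem hb)
end
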